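/- Fix a positive integer l, let a_r be the coefficient of x^r in (x²+x+1)^{l-1}(2x+1)(x+2)(x-1), and define P_l(e,f) := Σ_{r=0}^{2l+1} a_r (e)_r (−f)_{2l+1−r}. Then P_l(2e, e+l) = 0 for all e. -/

import Mathlib

/-!
For fixed `l`, `e ↦ P_l(2e, e + l)` is a polynomial in `e`, so it suffices that it vanishes at
every natural number `m > l`. There, with `n = 2l + 1`, `N = 2m - 1` and `K = m + l` (so that
`N + n = 2K`), the rising factorials turn `P_l(2m, m + l)` into a nonzero multiple of
`∑ r, a_r (-1)^r C(N + r, K)`, the coefficient of `x^K` in `(1 + x)^N A(-1 - x)`, where `A` is the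
polynomial with coefficients `a_r`. Since `A(-1 - x) = -A(x)`, this is minus the middle coefficient
of `(1 + x)^N A(x)`, which vanishes because `(1 + x)^N` is palindromic of degree `N` and `A` is
antipalindromic of degree `n`.
-/

open Finset Polynomial

noncomputable section

/-- rising factorial -/
def rf {R : Type*} [CommRing R] (a : R) (k : ℕ) : R := ∏ i ∈ Finset.range k, (a + i)

/-- the polynomial `(x²+x+1)^{l-1}(2x+1)(x+2)(x-1)` -/
def APoly (l : ℕ) : Polynomial ℚ :=
  (X ^ 2 + X + 1) ^ (l - 1) * (2 * X + 1) * (X + 2) * (X - 1)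

/-- `P_l(e,f) = Σ_r a_r (e)_r (−f)_{2l+1−r}` -/
def PP (l : ℕ) {K : Type*} [Field K] (e f : K) : K :=
  ∑ r ∈ Finset.range (2 * l + 2), ((APoly l).coeff r : K) * rf e r * rf (-f) (2 * l + 1 - r)

section RisingFactorial

variable {R : Type*} [CommRing R]

theorem rf_eq_eval_ascPochhammer (a : R) (k : ℕ) : rf a k = (ascPochhammer R k).eval a := by
  induction k with
  | zero => simp [rf]
  | succ k ih => rw [rf, prod_range_succ, ← rf, ih, ascPochhammer_succ_eval]

theorem rf_natCast (m k : ℕ) : rf (m : R) k = m.ascFactorial k := by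
  rw [rf_eq_eval_ascPochhammer, ascPochhammer_nat_eq_natCast_ascFactorial]

theorem rf_neg_natCast (m k : ℕ) : rf (-(m : R)) k = (-1) ^ k * m.descFactorial k := by
  rw [rf_eq_eval_ascPochhammer, ascPochhammer_eval_neg_eq_descPochhammer,
    descPochhammer_eval_eq_descFactorial]

end RisingFactorial

theorem neg_one_pow_sub_of_odd {R : Type*} [Ring R] {n r : ℕ} (hn : Odd n) (hr : r ≤ n) :
    (-1 : R) ^ (n - r) = -(-1) ^ r := by
  have h : (-1 : R) ^ (n - r) * (-1) ^ r = -1 := by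
    rw [← pow_add, Nat.sub_add_cancel hr, hn.neg_one_pow]
  calc (-1 : R) ^ (n - r) = (-1) ^ (n - r) * (-1) ^ r * (-1) ^ r := by
        rw [mul_assoc, ← pow_add, ← two_mul, pow_mul, neg_one_sq, one_pow, mul_one]
    _ = -(-1) ^ r := by rw [h, neg_one_mul]

namespace Polynomial

theorem coeff_eq_zero_of_reflect_eq_neg {R : Type*} [Ring R] [IsAddTorsionFree R] {p : R[X]}
    {k : ℕ} (h : p.reflect (2 * k) = -p) : p.coeff k = 0 := by
  have hk := congrArg (coeff · k) h
  simp only [coeff_reflect, revAt_le (by omega : k ≤ 2 * k), coeff_neg] at hk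
  rwa [show 2 * k - k = k by omega, self_eq_neg] at hk

theorem reflect_pow_of_reflect_eq {R : Type*} [Semiring R] {p : R[X]} {N : ℕ}
    (hdeg : p.natDegree ≤ N) (hp : p.reflect N = p) (m : ℕ) :
    (p ^ m).reflect (N * m) = p ^ m := by
  induction m with
  | zero => simp
  | succ m ih =>
    rw [pow_succ, mul_add, mul_one, reflect_mul _ _ (natDegree_pow_le_of_le m hdeg |>.trans_eq
      (mul_comm _ _)) hdeg, ih, hp]

section XAddOnePow

variable {R : Type*} [CommRing R]

theorem coeff_X_add_one_pow_mul_eq_zero_of_reflect_eq_neg [IsAddTorsionFree R] {A : R[X]}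
    {n N K : ℕ} (hdeg : A.natDegree ≤ n) (hA : A.reflect n = -A) (hK : N + n = 2 * K) :
    ((X + 1) ^ N * A).coeff K = 0 := by
  have hlin : (X + 1 : R[X]).natDegree ≤ 1 := by compute_degree
  have hpow : ((X + 1 : R[X]) ^ N).natDegree ≤ N := by
    simpa using natDegree_pow_le_of_le N hlin
  have hsymm : ((X + 1 : R[X]) ^ N).reflect N = (X + 1) ^ N := by
    simpa using reflect_pow_of_reflect_eq hlin (by simp [reflect_add, reflect_one_X, add_comm]) N
  apply coeff_eq_zero_of_reflect_eq_neg
  rw [← hK, reflect_mul _ _ hpow hdeg, hsymm, hA, mul_neg]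

theorem coeff_X_add_one_pow_mul_comp_neg_X_add_one {A : R[X]} {n : ℕ} (hdeg : A.natDegree ≤ n)
    (N K : ℕ) :
    ((X + 1) ^ N * A.comp (-(X + 1))).coeff K =
      ∑ r ∈ range (n + 1), A.coeff r * (-1) ^ r * ((N + r).choose K : R) := by
  rw [comp_eq_sum_left, sum_over_range' _ (by simp) (n + 1) (by omega), mul_sum,
    finsetSum_coeff]
  refine sum_congr rfl fun r _ => ?_
  rw [show (X + 1 : R[X]) ^ N * (C (A.coeff r) * (-(X + 1)) ^ r) =
      C (A.coeff r * (-1) ^ r) * (X + 1) ^ (N + r) by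
    rw [neg_pow, pow_add, C_mul, C_pow, C_neg, C_1]; ring]
  rw [coeff_C_mul, coeff_X_add_one_pow]

theorem sum_coeff_mul_neg_one_pow_mul_choose_eq_zero [IsAddTorsionFree R] {A : R[X]} {n N K : ℕ}
    (hdeg : A.natDegree ≤ n) (hA : A.reflect n = -A) (hcomp : A.comp (-(X + 1)) = -A)
    (hK : N + n = 2 * K) :
    ∑ r ∈ range (n + 1), A.coeff r * (-1) ^ r * ((N + r).choose K : R) = 0 := by
  rw [← coeff_X_add_one_pow_mul_comp_neg_X_add_one hdeg, hcomp, mul_neg, coeff_neg,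
    coeff_X_add_one_pow_mul_eq_zero_of_reflect_eq_neg hdeg hA hK, neg_zero]

end XAddOnePow

theorem eq_zero_of_eval_natCast_eq_zero {R : Type*} [CommRing R] [IsDomain R] [CharZero R]
    (p : R[X]) (c : ℕ) (h : ∀ m : ℕ, c < m → p.eval (m : R) = 0) : p = 0 :=
  p.eq_zero_of_infinite_isRoot <| Set.infinite_of_injective_forall_mem
    (f := fun d : ℕ => ((c + 1 + d : ℕ) : R)) (fun a b hab => by simpa using hab)
    (fun d => h _ (by omega))

end Polynomial

theorem reflect_X_sq_add_X_add_one : (X ^ 2 + X + 1 : ℚ[X]).reflect 2 = X ^ 2 + X + 1 := by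
  rw [show (X ^ 2 + X + 1 : ℚ[X]) = X ^ 2 + X ^ 1 + X ^ 0 by simp]
  simp only [reflect_add, reflect_monomial, show revAt 2 2 = 0 from rfl,
    show revAt 2 1 = 1 from rfl, show revAt 2 0 = 2 from rfl]
  ring

theorem reflect_cubic_factor :
    ((2 * X + 1 : ℚ[X]) * (X + 2) * (X - 1)).reflect 3 = -((2 * X + 1) * (X + 2) * (X - 1)) := by
  rw [show (2 * X + 1 : ℚ[X]) * (X + 2) * (X - 1) =
      C 2 * X ^ 3 + C 3 * X ^ 2 - C 3 * X ^ 1 - C 2 * X ^ 0 by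
    simp only [C_ofNat, pow_one, pow_zero]; ring]
  simp only [reflect_add, reflect_sub, reflect_C_mul_X_pow, show revAt 3 3 = 0 from rfl,
    show revAt 3 2 = 1 from rfl, show revAt 3 1 = 2 from rfl, show revAt 3 0 = 3 from rfl]
  ring

theorem natDegree_APoly_le {l : ℕ} (hl : 0 < l) : (APoly l).natDegree ≤ 2 * l + 1 := by
  obtain ⟨m, rfl⟩ := Nat.exists_eq_add_one_of_ne_zero hl.ne'
  simp only [APoly, Nat.add_sub_cancel]
  compute_degree
  omega

theorem reflect_APoly {l : ℕ} (hl : 0 < l) : (APoly l).reflect (2 * l + 1) = -APoly l := by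
  obtain ⟨m, rfl⟩ := Nat.exists_eq_add_one_of_ne_zero hl.ne'
  have hcubic : ((2 * X + 1 : ℚ[X]) * (X + 2) * (X - 1)).natDegree ≤ 3 := by compute_degree
  have hquad : (X ^ 2 + X + 1 : ℚ[X]).natDegree ≤ 2 := by compute_degree
  have hpow : ((X ^ 2 + X + 1 : ℚ[X]) ^ m).natDegree ≤ 2 * m :=
    (natDegree_pow_le_of_le m hquad).trans_eq (mul_comm _ _)
  simp only [APoly, Nat.add_sub_cancel, mul_assoc]
  rw [show 2 * (m + 1) + 1 = 2 * m + 3 by ring, ← mul_assoc (2 * X + 1 : ℚ[X]),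
    reflect_mul _ _ hpow hcubic, reflect_pow_of_reflect_eq hquad reflect_X_sq_add_X_add_one,
    reflect_cubic_factor, mul_neg]

theorem APoly_comp_neg_X_add_one (l : ℕ) : (APoly l).comp (-(X + 1)) = -APoly l := by
  simp only [APoly, mul_comp, pow_comp, add_comp, sub_comp, X_comp, one_comp, ofNat_comp]
  ring

theorem Nat.factorial_mul_ascFactorial_mul_descFactorial {n r : ℕ} (d : ℕ) (hr : r ≤ n) :
    (n + 2 * d).factorial * (n + 2 * d + 1).ascFactorial r * (n + d).descFactorial (n - r) =
      (n + d).factorial * (n + d).factorial * (n + 2 * d + r).choose (n + d) := by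
  have hasc := Nat.factorial_mul_ascFactorial (n + 2 * d) r
  have hdesc := Nat.factorial_mul_descFactorial (n := n + d) (k := n - r) (by omega)
  have hchoose := Nat.add_choose_mul_factorial_mul_factorial (d + r) (n + d)
  rw [show n + d - (n - r) = d + r by omega] at hdesc
  rw [show d + r + (n + d) = n + 2 * d + r by omega] at hchoose
  apply Nat.eq_of_mul_eq_mul_left (Nat.factorial_pos (d + r))
  calc (d + r).factorial * ((n + 2 * d).factorial * (n + 2 * d + 1).ascFactorial r *
        (n + d).descFactorial (n - r))
      = (n + 2 * d + r).factorial * (n + d).factorial := by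
        rw [← hasc, ← hdesc]; ring
    _ = _ := by rw [← hchoose]; ring

theorem PP_two_mul_natCast_add {l m : ℕ} (hl : 0 < l) (hm : l < m) :
    PP l (2 * (m : ℚ)) (m + l) = 0 := by
  obtain ⟨d, rfl⟩ : ∃ d, m = l + 1 + d := ⟨m - l - 1, by omega⟩
  set n := 2 * l + 1 with hn
  have hodd : Odd n := ⟨l, rfl⟩
  have he : 2 * ((l + 1 + d : ℕ) : ℚ) = ((n + 2 * d + 1 : ℕ) : ℚ) := by push_cast [hn]; ring
  have hf : ((l + 1 + d : ℕ) : ℚ) + l = ((n + d : ℕ) : ℚ) := by push_cast [hn]; ring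
  have hterm : ∀ r ∈ range (n + 1),
      ((n + 2 * d).factorial : ℚ) * ((APoly l).coeff r * rf ((n + 2 * d + 1 : ℕ) : ℚ) r *
        rf (-((n + d : ℕ) : ℚ)) (n - r)) =
      -((n + d).factorial * (n + d).factorial : ℚ) *
        ((APoly l).coeff r * (-1) ^ r * ((n + 2 * d + r).choose (n + d) : ℚ)) := by
    intro r hrange
    have hr : r ≤ n := Nat.lt_succ_iff.mp (mem_range.mp hrange)
    have hnat : ((n + 2 * d).factorial * (n + 2 * d + 1).ascFactorial r *
        (n + d).descFactorial (n - r) : ℚ) =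
        (n + d).factorial * (n + d).factorial * ((n + 2 * d + r).choose (n + d) : ℚ) := by
      exact_mod_cast Nat.factorial_mul_ascFactorial_mul_descFactorial d hr
    rw [rf_natCast, rf_neg_natCast, neg_one_pow_sub_of_odd hodd hr]
    linear_combination (-(APoly l).coeff r * (-1) ^ r) * hnat
  have hsum := sum_coeff_mul_neg_one_pow_mul_choose_eq_zero (natDegree_APoly_le hl)
    (reflect_APoly hl) (APoly_comp_neg_X_add_one l) (N := n + 2 * d) (K := n + d) (by omega)
  have hfac : ((n + 2 * d).factorial : ℚ) ≠ 0 := by positivity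
  rw [PP, he, hf, ← mul_right_inj' hfac, mul_sum, mul_zero]
  simp only [Rat.cast_id]
  rw [sum_congr rfl hterm, ← mul_sum, hsum, mul_zero]

theorem exists_eval_eq_PP (l : ℕ) :
    ∃ Q : ℚ[X], ∀ e : ℚ, Q.eval e = PP l (2 * e) (e + l) :=
  ⟨∑ r ∈ range (2 * l + 2), C ((APoly l).coeff r) * (ascPochhammer ℚ r).comp (2 * X) *
      (ascPochhammer ℚ (2 * l + 1 - r)).comp (-(X + (l : ℚ[X]))),
    fun e => by simp [PP, eval_finsetSum, rf_eq_eval_ascPochhammer]⟩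

theorem stmt7 (l : ℕ) (hl : 0 < l) (e : ℚ) :
    PP l (2 * e) (e + l) = 0 := by
  obtain ⟨Q, hQ⟩ := exists_eval_eq_PP l
  have hQ0 : Q = 0 := Q.eq_zero_of_eval_natCast_eq_zero l fun m hm => by
    rw [hQ]; exact PP_two_mul_natCast_add hl hm
  simpa [hQ0] using (hQ e).symm

end
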